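/- arXiv:1805.07700 — 6 statements merged into one kernel-verified Lean document; each statement's English description precedes it below -/
import Mathlib

section
/- Let N ≥ 0 and let (X_n, F_n, P), 0 ≤ n ≤ N, be a discrete-time adapted stochastic process with X_N ≥ 0 and X_N integrable. Suppose there exists a > 0 such that E(X_N | F_n) ≥ a·X_n almost surely for all 0 ≤ n < N. Then for every α > 0, P(max_{0≤n≤N} X_n ≥ α) ≤ (1/(α·min(a,1)))·E[X_N · 1{max_{0≤n≤N} X_n ≥ α}]. -/
/-!
Let `τ` be the first time `n ≤ N` with `α ≤ X n`. The event `{max_{n ≤ N} X n ≥ α}` is the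
disjoint union of the `ℱ n`-measurable events `{τ = n, α ≤ X n}`. On such an event with
`n < N`, the hypothesis gives `E(X N | ℱ n) ≥ a α`, so integrating over it yields
`∫ X N ≥ a α P(τ = n, α ≤ X n)`; for `n = N` directly `X N ≥ α`. Summing over `n` gives the
bound with constant `α · min a 1`.
-/

open MeasureTheory Finset

section

variable {Ω : Type*} {m0 : MeasurableSpace Ω} {μ : Measure Ω}

theorem mul_measureReal_le_setIntegral_of_ae_le_condExp [IsFiniteMeasure μ]
    {m : MeasurableSpace Ω} (hm : m ≤ m0) {Y : Ω → ℝ} (hY : Integrable Y μ) {s : Set Ω}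
    (hs : MeasurableSet[m] s) {β : ℝ} (h : ∀ᵐ ω ∂μ, ω ∈ s → β ≤ μ[Y|m] ω) :
    β * μ.real s ≤ ∫ ω in s, Y ω ∂μ := by
  rw [← setIntegral_condExp hm hY hs, mul_comm, ← smul_eq_mul, ← setIntegral_const]
  exact setIntegral_mono_on_ae (integrableOn_const (measure_ne_top μ s))
    integrable_condExp.integrableOn (hm s hs) h

theorem mul_measureReal_biUnion_le_setIntegral [IsFiniteMeasure μ] {ι : Type*} {t : Finset ι}
    {B : ι → Set Ω} (hB : ∀ i ∈ t, MeasurableSet (B i)) (hd : (t : Set ι).PairwiseDisjoint B)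
    {Y : Ω → ℝ} (hY : Integrable Y μ) {β : ℝ}
    (h : ∀ i ∈ t, β * μ.real (B i) ≤ ∫ ω in B i, Y ω ∂μ) :
    β * μ.real (⋃ i ∈ t, B i) ≤ ∫ ω in ⋃ i ∈ t, B i, Y ω ∂μ := by
  rw [measureReal_biUnion_finset hd hB, integral_biUnion_finset t hB hd fun i _ => hY.integrableOn,
    mul_sum]
  exact sum_le_sum h

theorem setOf_le_sup'_eq_biUnion_hittingBtwn (X : ℕ → Ω → ℝ) (α : ℝ) (N : ℕ) :
    {ω | α ≤ (range (N + 1)).sup' nonempty_range_add_one fun n => X n ω} =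
      ⋃ n ∈ range (N + 1), {ω | hittingBtwn X (Set.Ici α) 0 N ω = n ∧ α ≤ X n ω} := by
  ext ω
  simp only [Set.mem_ofPred_eq, le_sup'_iff, Set.mem_iUnion, mem_range, Nat.lt_succ_iff,
    exists_prop]
  constructor
  · rintro ⟨j, hjN, hj⟩
    have hhit : ∃ j ∈ Set.Icc 0 N, X j ω ∈ Set.Ici α := ⟨j, ⟨j.zero_le, hjN⟩, hj⟩
    exact ⟨_, hittingBtwn_le ω, rfl, hittingBtwn_mem_set hhit⟩
  · rintro ⟨n, hnN, -, hn⟩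
    exact ⟨n, hnN, hn⟩

theorem mul_measureReal_le_sup'_le_setIntegral [IsFiniteMeasure μ] {ℱ : Filtration ℕ m0}
    {X : ℕ → Ω → ℝ} (hX : Adapted ℱ X) {Y : Ω → ℝ} (hY : Integrable Y μ) {N : ℕ} {α β : ℝ}
    (h : ∀ n ≤ N, ∀ s, MeasurableSet[ℱ n] s → s ⊆ {ω | α ≤ X n ω} →
      β * μ.real s ≤ ∫ ω in s, Y ω ∂μ) :
    β * μ.real {ω | α ≤ (range (N + 1)).sup' nonempty_range_add_one fun n => X n ω} ≤
      ∫ ω in {ω | α ≤ (range (N + 1)).sup' nonempty_range_add_one fun n => X n ω}, Y ω ∂μ := by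
  have hτ := hX.isStoppingTime_hittingBtwn (s := Set.Ici α) (n := 0) (n' := N) measurableSet_Ici
  have hB : ∀ n, MeasurableSet[ℱ n] {ω | hittingBtwn X (Set.Ici α) 0 N ω = n ∧ α ≤ X n ω} :=
    fun n => by
      simpa only [Set.ofPred_and, WithTop.coe_inj] using
        (hτ.measurableSet_eq n).inter (measurableSet_le measurable_const (hX n))
  rw [setOf_le_sup'_eq_biUnion_hittingBtwn]
  refine mul_measureReal_biUnion_le_setIntegral (fun n _ => ℱ.le n _ (hB n)) ?_ hY ?_
  · intro i _ j _ hij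
    exact Set.disjoint_left.2 fun ω hi hj => hij (hi.1.symm.trans hj.1)
  · intro n hn
    exact h n (Nat.lt_succ_iff.1 (mem_range.1 hn)) _ (hB n) fun ω hω => hω.2

end

/-- **Improved Doob inequality (discrete).** If `(X n)_{n ≤ N}` is adapted, `X N ≥ 0` is
integrable, and `E(X N | ℱ n) ≥ a • X n` a.s. for all `n < N` with `a > 0`, then for `α > 0`,
`P(max_{0 ≤ n ≤ N} X n ≥ α) ≤ (1/(α * min a 1)) * E[X N ; max_{0 ≤ n ≤ N} X n ≥ α]`. -/
theorem improved_doob_discrete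
    {Ω : Type*} {m0 : MeasurableSpace Ω} {μ : Measure Ω} [IsProbabilityMeasure μ]
    {N : ℕ} {ℱ : Filtration ℕ m0} {X : ℕ → Ω → ℝ}
    (hadp : Adapted ℱ X)
    (hint : Integrable (X N) μ)
    {a : ℝ} (ha : 0 < a)
    (hcond : ∀ n < N, (fun ω => a * X n ω) ≤ᵐ[μ] μ[X N | ℱ n])
    (α : ℝ) (hα : 0 < α) :
    (μ {ω | α ≤ (Finset.range (N + 1)).sup' (by simp) (fun n => X n ω)}).toReal ≤
      (1 / (α * min a 1)) *
        ∫ ω in {ω | α ≤ (Finset.range (N + 1)).sup' (by simp) (fun n => X n ω)}, X N ω ∂μ := by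
  rw [one_div_mul_eq_div, le_div_iff₀ (by positivity), mul_comm, ← measureReal_def]
  refine mul_measureReal_le_sup'_le_setIntegral hadp hint fun n hn s hs hsX => ?_
  rcases hn.lt_or_eq with hn | rfl
  · calc α * min a 1 * μ.real s ≤ α * a * μ.real s := by gcongr; exact min_le_left a 1
      _ ≤ ∫ ω in s, X N ω ∂μ := by
          refine mul_measureReal_le_setIntegral_of_ae_le_condExp (ℱ.le n) hint hs ?_
          filter_upwards [hcond n hn] with ω hω hωs
          have hαX : α ≤ X n ω := hsX hωs
          nlinarith
  · calc α * min a 1 * μ.real s ≤ α * 1 * μ.real s := by gcongr; exact min_le_right a 1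
      _ = α * μ.real s := by rw [mul_one]
      _ ≤ ∫ ω in s, X n ω ∂μ :=
          setIntegral_ge_of_const_le_real (ℱ.le n _ hs) (measure_ne_top μ s) hsX
            hint.integrableOn
end

section
/- Let N ≥ 0, p > 1, and let (X_n, F_n, P), 0 ≤ n ≤ N, be an adapted process with X_N ≥ 0, E(X_N | F_n) ≥ a X_n a.s. for all 0 ≤ n < N with a > 0, and E(X_i^p) < ∞ for all 0 ≤ i ≤ N. Then, with X*_N := max_{0≤n≤N} X_n and ã := min(a,1), one has ‖X*_N‖_p ≤ (1/ã)·(p/(p−1))·‖X_N‖_p. -/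
open MeasureTheory Filter

section auxiliary_doob

open MeasureTheory Filter Finset Set
open scoped ENNReal NNReal

variable {Ω : Type*} {m0 : MeasurableSpace Ω} {μ : Measure Ω}

theorem doob_Lp_core [IsProbabilityMeasure μ] {ℱ : Filtration ℕ m0} {f : ℕ → Ω → ℝ}
    (hsub : Submartingale f ℱ μ) (hnn : 0 ≤ f) {p : ℝ} (hp : 1 < p) (N : ℕ) :
    eLpNorm (fun ω => (range (N + 1)).sup' nonempty_range_add_one fun n => f n ω)
        (ENNReal.ofReal p) μ ≤
      ENNReal.ofReal (p / (p - 1)) * eLpNorm (f N) (ENNReal.ofReal p) μ := by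
  have hpq : p.HolderConjugate (p / (p - 1)) := Real.HolderConjugate.conjExponent hp
  set q : ℝ := p / (p - 1) with hq
  have hp0 : 0 < p := hpq.pos
  have hp1 : 0 < p - 1 := hpq.sub_one_pos
  have hq0 : 0 < q := hpq.symm.pos
  have hinv : 1 / p + 1 / q = 1 := by
    rw [one_div, one_div]; exact hpq.inv_add_inv_eq_one
  -- the running maximum
  set G : Ω → ℝ := fun ω => (range (N + 1)).sup' nonempty_range_add_one fun n => f n ω with hG
  have hGmble : Measurable G :=
    Finset.measurable_range_sup'' fun n _ => ((hsub.stronglyMeasurable n).measurable.le (ℱ.le n))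
  have hGnn : ∀ ω, 0 ≤ G ω := fun ω =>
    le_trans (hnn N ω) (Finset.le_sup' (fun n => f n ω) (mem_range.2 (Nat.lt_succ_self N)))
  have hfNnn : ∀ ω, 0 ≤ f N ω := fun ω => hnn N ω
  -- h : ℝ≥0∞-valued f N
  set h : Ω → ℝ≥0∞ := fun ω => ENNReal.ofReal (f N ω) with hh
  have hhmble : Measurable h :=
    ENNReal.measurable_ofReal.comp ((hsub.stronglyMeasurable N).measurable.le (ℱ.le N))
  set A : ℝ≥0∞ := ∫⁻ ω, h ω ^ p ∂μ with hA
  -- the truncated maxima and their p-th moments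
  set GK : ℕ → Ω → ℝ := fun K ω => min (G ω) K with hGK
  have hGKmble : ∀ K, Measurable (GK K) := fun K => hGmble.min measurable_const
  have hGKnn : ∀ K ω, 0 ≤ GK K ω := fun K ω => le_min (hGnn ω) (Nat.cast_nonneg K)
  set J : ℕ → ℝ≥0∞ := fun K => ∫⁻ ω, ENNReal.ofReal (GK K ω ^ p) ∂μ with hJ
  -- elementary integral computation
  have hIoc : ∀ c : ℝ, 0 ≤ c →
      (∫⁻ t in Ioc (0:ℝ) c, ENNReal.ofReal (t ^ (p - 2))) =
        ENNReal.ofReal (c ^ (p - 1) / (p - 1)) := by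
    intro c hc
    have hint : IntervalIntegrable (fun t : ℝ => t ^ (p - 2)) volume 0 c :=
      intervalIntegral.intervalIntegrable_rpow' (by linarith)
    have hIntOn : IntegrableOn (fun t : ℝ => t ^ (p - 2)) (Ioc 0 c) volume := by
      simpa [intervalIntegrable_iff, Set.uIoc_of_le hc] using hint
    rw [← ofReal_integral_eq_lintegral_ofReal hIntOn
        ((ae_restrict_iff' measurableSet_Ioc).2 (Filter.Eventually.of_forall
          fun t ht => Real.rpow_nonneg ht.1.le _))]
    congr 1
    rw [← intervalIntegral.integral_of_le hc, integral_rpow (Or.inl (by linarith)),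
      Real.zero_rpow (by linarith : p - 2 + 1 ≠ 0), show p - 2 + 1 = p - 1 by ring]
    ring
  -- Step A: weak maximal inequality, truncated version
  have weak : ∀ K : ℕ, ∀ t : ℝ, 0 < t →
      ENNReal.ofReal t * μ {ω | t ≤ GK K ω} ≤ ∫⁻ ω in {ω | t ≤ GK K ω}, h ω ∂μ := by
    intro K t ht
    rcases le_or_gt t K with htK | htK
    · have hset : {ω | t ≤ GK K ω} = {ω | t ≤ G ω} := by
        ext ω; simp only [hGK, Set.mem_setOf_eq, le_min_iff, htK, and_true]
      rw [hset]
      have hmax := maximal_ineq (μ := μ) (𝒢 := ℱ) hsub hnn (ε := t.toNNReal) N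
      have hcoe : (t.toNNReal : ℝ) = t := Real.coe_toNNReal t ht.le
      rw [hcoe] at hmax
      have hofReal : ENNReal.ofReal
          (∫ ω in {ω | t ≤ G ω}, f N ω ∂μ) = ∫⁻ ω in {ω | t ≤ G ω}, h ω ∂μ := by
        refine ofReal_integral_eq_lintegral_ofReal ((hsub.integrable N).integrableOn) ?_
        exact Filter.Eventually.of_forall fun ω => hfNnn ω
      calc ENNReal.ofReal t * μ {ω | t ≤ G ω}
          = (t.toNNReal : ℝ≥0∞) * μ {ω | t ≤ G ω} := by rw [ENNReal.ofReal]
        _ ≤ ENNReal.ofReal (∫ ω in {ω | t ≤ G ω}, f N ω ∂μ) := hmax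
        _ = _ := hofReal
    · have hset : {ω | t ≤ GK K ω} = (∅ : Set Ω) := by
        ext ω
        simp only [hGK, Set.mem_setOf_eq, Set.mem_empty_iff_false, iff_false, not_le]
        exact lt_of_le_of_lt (min_le_right _ _) htK
      rw [hset]
      simp
  -- Step B: the key bound `J K ≤ q * A^{1/p} * (J K)^{1/q}`
  have key : ∀ K : ℕ, J K ≤ ENNReal.ofReal q * A ^ (1 / p) * (J K) ^ (1 / q) := by
    intro K
    -- layer cake
    have hlc : J K = ENNReal.ofReal p *
        ∫⁻ t in Ioi (0:ℝ), μ {ω | t ≤ GK K ω} * ENNReal.ofReal (t ^ (p - 1)) :=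
      lintegral_rpow_eq_lintegral_meas_le_mul μ
        (Filter.Eventually.of_forall (hGKnn K)) (hGKmble K).aemeasurable hp0
    -- pointwise bound under the t-integral
    have hptwise : ∀ t ∈ Ioi (0:ℝ),
        μ {ω | t ≤ GK K ω} * ENNReal.ofReal (t ^ (p - 1)) ≤
          (∫⁻ ω in {ω | t ≤ GK K ω}, h ω ∂μ) * ENNReal.ofReal (t ^ (p - 2)) := by
      intro t ht
      rw [Set.mem_Ioi] at ht
      have hsplit : ENNReal.ofReal (t ^ (p - 1)) =
          ENNReal.ofReal t * ENNReal.ofReal (t ^ (p - 2)) := by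
        rw [← ENNReal.ofReal_mul ht.le]
        congr 1
        rw [show p - 1 = 1 + (p - 2) by ring, Real.rpow_add ht, Real.rpow_one]
      rw [hsplit, ← mul_assoc, mul_comm (μ _) (ENNReal.ofReal t)]
      exact mul_le_mul_left (weak K t ht) _
    have hmono1 : J K ≤ ENNReal.ofReal p *
        ∫⁻ t in Ioi (0:ℝ),
          (∫⁻ ω in {ω | t ≤ GK K ω}, h ω ∂μ) * ENNReal.ofReal (t ^ (p - 2)) := by
      rw [hlc]
      exact mul_le_mul_right
        (lintegral_mono_ae ((ae_restrict_iff' measurableSet_Ioi).2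
          (Filter.Eventually.of_forall hptwise))) _
    -- Fubini
    set g : ℝ × Ω → ℝ≥0∞ :=
      fun z => h z.2 * ENNReal.ofReal (z.1 ^ (p - 2)) with hgdef
    set S : Set (ℝ × Ω) := {z : ℝ × Ω | z.1 ≤ GK K z.2} with hS
    have hSmble : MeasurableSet S :=
      measurableSet_le measurable_fst ((hGKmble K).comp measurable_snd)
    have hgmble : Measurable (S.indicator g) := by
      refine Measurable.indicator ?_ hSmble
      exact (hhmble.comp measurable_snd).mul
        (ENNReal.measurable_ofReal.comp (measurable_fst.pow_const _))
    have heq1 : ∀ t : ℝ,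
        (∫⁻ ω in {ω | t ≤ GK K ω}, h ω ∂μ) * ENNReal.ofReal (t ^ (p - 2)) =
          ∫⁻ ω, S.indicator g (t, ω) ∂μ := by
      intro t
      have hset : MeasurableSet {ω | t ≤ GK K ω} :=
        measurableSet_le measurable_const (hGKmble K)
      rw [← lintegral_indicator hset, ← lintegral_mul_const _ (hhmble.indicator hset)]
      congr 1; funext ω
      by_cases hω : t ≤ GK K ω <;> simp [Set.indicator, hS, hgdef, hω]
    have haem : AEMeasurable (Function.uncurry fun t ω => S.indicator g (t, ω))
        ((volume.restrict (Ioi (0:ℝ))).prod μ) := by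
      exact ((hgmble.comp (measurable_fst.prodMk measurable_snd)).aemeasurable)
    have hswap := lintegral_lintegral_swap (μ := volume.restrict (Ioi (0:ℝ))) (ν := μ) haem
    have hinner : ∀ ω, (∫⁻ t in Ioi (0:ℝ), S.indicator g (t, ω)) =
        h ω * ENNReal.ofReal (GK K ω ^ (p - 1) / (p - 1)) := by
      intro ω
      have h1 : ∀ t : ℝ, S.indicator g (t, ω) =
          h ω * (Iic (GK K ω)).indicator (fun t => ENNReal.ofReal (t ^ (p - 2))) t := by
        intro t; by_cases hω : t ≤ GK K ω <;> simp [Set.indicator, hS, hgdef, hω]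
      simp_rw [h1]
      rw [lintegral_const_mul _ (Measurable.indicator
        ((measurable_id'.pow_const (p - 2)).ennreal_ofReal) measurableSet_Iic)]
      congr 1
      rw [lintegral_indicator measurableSet_Iic, Measure.restrict_restrict measurableSet_Iic,
        Set.inter_comm, Set.Ioi_inter_Iic]
      exact hIoc _ (hGKnn K ω)
    -- Hölder
    have hGKp1 : Measurable fun ω => ENNReal.ofReal (GK K ω ^ (p - 1)) :=
      ENNReal.measurable_ofReal.comp ((hGKmble K).pow_const _)
    have hHolder : (∫⁻ ω, h ω * ENNReal.ofReal (GK K ω ^ (p - 1)) ∂μ) ≤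
        A ^ (1 / p) * (J K) ^ (1 / q) := by
      have hH := ENNReal.lintegral_mul_le_Lp_mul_Lq μ hpq hhmble.aemeasurable
        hGKp1.aemeasurable
      simp only [Pi.mul_apply] at hH
      have hrw : ∀ ω, (ENNReal.ofReal (GK K ω ^ (p - 1))) ^ q =
          ENNReal.ofReal (GK K ω ^ p) := by
        intro ω
        rw [ENNReal.ofReal_rpow_of_nonneg (Real.rpow_nonneg (hGKnn K ω) _) hq0.le,
          ← Real.rpow_mul (hGKnn K ω), hpq.sub_one_mul_conj]
      simp_rw [hrw] at hH
      exact hH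
    -- put everything together
    calc J K ≤ ENNReal.ofReal p * ∫⁻ t in Ioi (0:ℝ),
          (∫⁻ ω in {ω | t ≤ GK K ω}, h ω ∂μ) * ENNReal.ofReal (t ^ (p - 2)) := hmono1
      _ = ENNReal.ofReal p *
          ∫⁻ ω, h ω * ENNReal.ofReal (GK K ω ^ (p - 1) / (p - 1)) ∂μ := by
          congr 1
          simp_rw [heq1]
          rw [hswap]
          exact lintegral_congr hinner
      _ = ENNReal.ofReal q * ∫⁻ ω, h ω * ENNReal.ofReal (GK K ω ^ (p - 1)) ∂μ := by
          have hfact : ∀ ω, h ω * ENNReal.ofReal (GK K ω ^ (p - 1) / (p - 1)) =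
              (h ω * ENNReal.ofReal (GK K ω ^ (p - 1))) * ENNReal.ofReal (p - 1)⁻¹ := by
            intro ω
            rw [div_eq_mul_inv, ENNReal.ofReal_mul (Real.rpow_nonneg (hGKnn K ω) _),
              mul_assoc]
          simp_rw [hfact]
          rw [lintegral_mul_const (f := fun ω => h ω * ENNReal.ofReal (GK K ω ^ (p - 1))) _ (hhmble.mul hGKp1),
            show ∀ I c d : ℝ≥0∞, d * (I * c) = (d * c) * I from fun I c d => by ring,
            ← ENNReal.ofReal_mul hp0.le, ← div_eq_mul_inv]
      _ ≤ ENNReal.ofReal q * (A ^ (1 / p) * (J K) ^ (1 / q)) :=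
          mul_le_mul_right hHolder _
      _ = ENNReal.ofReal q * A ^ (1 / p) * (J K) ^ (1 / q) := by rw [mul_assoc]
  -- Step C: finiteness of the truncated moments
  have hJfin : ∀ K : ℕ, J K ≠ ∞ := by
    intro K
    have hb : J K ≤ ENNReal.ofReal ((K : ℝ) ^ p) * μ Set.univ := by
      rw [← lintegral_const]
      refine lintegral_mono fun ω => ENNReal.ofReal_le_ofReal ?_
      exact Real.rpow_le_rpow (hGKnn K ω) (min_le_right _ _) hp0.le
    refine ne_top_of_le_ne_top ?_ hb
    simp [measure_univ]
  -- Step D: uniform bound on truncated L^p norms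
  have hstep : ∀ K : ℕ, (J K) ^ (1 / p) ≤ ENNReal.ofReal q * A ^ (1 / p) := by
    intro K
    by_cases h0 : J K = 0
    · rw [h0, ENNReal.zero_rpow_of_pos (by positivity : (0:ℝ) < 1 / p)]
      exact zero_le
    · have hfin : (J K) ^ (1 / q) ≠ ∞ :=
        ENNReal.rpow_ne_top_of_nonneg (by positivity) (hJfin K)
      have h0' : (J K) ^ (1 / q) ≠ 0 := by
        simp [ENNReal.rpow_eq_zero_iff, h0, hJfin K]
      have hineq : (J K) ^ (1 / p) * (J K) ^ (1 / q) ≤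
          (ENNReal.ofReal q * A ^ (1 / p)) * (J K) ^ (1 / q) := by
        rw [← ENNReal.rpow_add _ _ h0 (hJfin K), hinv, ENNReal.rpow_one]
        exact key K
      exact (ENNReal.mul_le_mul_iff_left h0' hfin).1 hineq
  -- Step E: monotone convergence as K → ∞
  have hsup : (∫⁻ ω, ENNReal.ofReal (G ω ^ p) ∂μ) = ⨆ K : ℕ, J K := by
    have hmono : Monotone fun K : ℕ => fun ω => ENNReal.ofReal (GK K ω ^ p) := by
      intro K L hKL
      intro ω
      refine ENNReal.ofReal_le_ofReal (Real.rpow_le_rpow (hGKnn K ω) ?_ hp0.le)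
      exact min_le_min le_rfl (Nat.cast_le.2 hKL)
    rw [← lintegral_iSup (fun K => ((hGKmble K).pow_const _).ennreal_ofReal) hmono]
    refine lintegral_congr fun ω => ?_
    refine le_antisymm (le_iSup_of_le ⌈G ω⌉₊ ?_) ?_
    · rw [show GK (⌈G ω⌉₊) ω = G ω from min_eq_left (Nat.le_ceil _)]
    · refine iSup_le fun K => ENNReal.ofReal_le_ofReal ?_
      exact Real.rpow_le_rpow (hGKnn K ω) (min_le_left _ _) hp0.le
  have hJtot : (∫⁻ ω, ENNReal.ofReal (G ω ^ p) ∂μ) ^ (1 / p) ≤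
      ENNReal.ofReal q * A ^ (1 / p) := by
    have hb : (∫⁻ ω, ENNReal.ofReal (G ω ^ p) ∂μ) ≤ (ENNReal.ofReal q * A ^ (1 / p)) ^ p := by
      rw [hsup]
      refine iSup_le fun K => ?_
      have := ENNReal.rpow_le_rpow (hstep K) hp0.le
      rwa [← ENNReal.rpow_mul, one_div_mul_cancel hp0.ne', ENNReal.rpow_one] at this
    have := ENNReal.rpow_le_rpow hb (by positivity : (0:ℝ) ≤ 1 / p)
    rwa [← ENNReal.rpow_mul, mul_one_div, div_self hp0.ne', ENNReal.rpow_one] at this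
  -- Step F: identify eLpNorms
  have hofp0 : ENNReal.ofReal p ≠ 0 := by
    simp [ENNReal.ofReal_eq_zero, not_le, hp0]
  have heLp : ∀ (g0 : Ω → ℝ), (∀ ω, 0 ≤ g0 ω) →
      eLpNorm g0 (ENNReal.ofReal p) μ = (∫⁻ ω, ENNReal.ofReal (g0 ω ^ p) ∂μ) ^ (1 / p) := by
    intro g0 hg0
    rw [eLpNorm_eq_lintegral_rpow_enorm_toReal hofp0 ENNReal.ofReal_ne_top,
      ENNReal.toReal_ofReal hp0.le]
    congr 1
    refine lintegral_congr fun ω => ?_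
    rw [Real.enorm_eq_ofReal (hg0 ω), ENNReal.ofReal_rpow_of_nonneg (hg0 ω) hp0.le]
  -- conclusion
  have hAeq : eLpNorm (f N) (ENNReal.ofReal p) μ = A ^ (1 / p) := by
    rw [heLp (f N) hfNnn, hA]
    congr 1
    refine lintegral_congr fun ω => ?_
    rw [hh, ENNReal.ofReal_rpow_of_nonneg (hfNnn ω) hp0.le]
  rw [heLp G hGnn, hAeq]
  exact hJtot

set_option synthInstance.maxHeartbeats 1000000
set_option maxHeartbeats 1000000

end auxiliary_doob

set_option synthInstance.maxHeartbeats 1000000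
set_option maxHeartbeats 1000000

/-- **`L^p` maximal inequality** corresponding to the improved Doob inequality:
`‖max_{0 ≤ n ≤ N} X n‖_p ≤ (1 / min a 1) * (p/(p-1)) * ‖X N‖_p`. -/
theorem improved_doob_Lp
    {Ω : Type*} {m0 : MeasurableSpace Ω} {μ : Measure Ω} [IsProbabilityMeasure μ]
    {N : ℕ} {ℱ : Filtration ℕ m0} {X : ℕ → Ω → ℝ}
    (hadp : StronglyAdapted ℱ X)
    (hpos : 0 ≤ X N)
    {a : ℝ} (ha : 0 < a)
    (hcond : ∀ n < N, (fun ω => a * X n ω) ≤ᵐ[μ] μ[X N | ℱ n])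
    {p : ℝ} (hp : 1 < p)
    (hmom : ∀ i ≤ N, MemLp (X i) (ENNReal.ofReal p) μ) :
    eLpNorm (fun ω => (Finset.range (N + 1)).sup' (by simp) (fun n => X n ω))
        (ENNReal.ofReal p) μ ≤
      ENNReal.ofReal ((1 / min a 1) * (p / (p - 1))) *
        eLpNorm (X N) (ENNReal.ofReal p) μ := by
  have hmin0 : 0 < min a 1 := lt_min ha one_pos
  have hXNint : Integrable (X N) μ :=
    (hmom N le_rfl).integrable (ENNReal.one_le_ofReal.2 hp.le)
  set M : ℕ → Ω → ℝ := fun n => μ[X N | ℱ n] with hM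
  have hmart : Martingale M ℱ μ := martingale_condExp (X N) ℱ μ
  have hsub : Submartingale (M⁺) ℱ μ := hmart.submartingale.pos
  have hnn : (0 : ℕ → Ω → ℝ) ≤ M⁺ := fun n ω => le_sup_right
  have hdoob := doob_Lp_core hsub hnn hp N
  -- the terminal value of `M⁺` is `X N`
  have hMN : M N = X N :=
    condExp_of_stronglyMeasurable (ℱ.le N) (hadp N) hXNint
  have hMpN : (M⁺) N = X N := by
    funext ω
    have h0 : (M⁺) N ω = M N ω ⊔ 0 := rfl
    rw [h0, hMN]
    exact sup_eq_left.2 (hpos ω)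
  -- a.e. domination of the running maximum
  have hae : ∀ᵐ ω ∂μ, ∀ n, n < N → a * X n ω ≤ M n ω := by
    rw [ae_all_iff]
    intro n
    by_cases hn : n < N
    · filter_upwards [hcond n hn] with ω hω using fun _ => hω
    · exact Filter.Eventually.of_forall fun ω h => absurd h hn
  have hptw : ∀ᵐ ω ∂μ, (Finset.range (N + 1)).sup' (by simp) (fun n => X n ω) ≤
      (1 / min a 1) *
        (Finset.range (N + 1)).sup' Finset.nonempty_range_add_one (fun n => (M⁺) n ω) := by
    filter_upwards [hae] with ω hω
    rw [Finset.sup'_le_iff]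
    intro n hn
    rw [Finset.mem_range, Nat.lt_succ_iff] at hn
    have h1 : min a 1 * X n ω ≤ (M⁺) n ω := by
      have hMp : (M⁺) n ω = M n ω ⊔ 0 := rfl
      rcases le_or_gt (X n ω) 0 with hx | hx
      · have : min a 1 * X n ω ≤ 0 := mul_nonpos_of_nonneg_of_nonpos hmin0.le hx
        exact this.trans (by rw [hMp]; exact le_sup_right)
      · rcases lt_or_eq_of_le hn with hn' | hn'
        · have h2 : a * X n ω ≤ M n ω := hω n hn'
          have h3 : min a 1 * X n ω ≤ a * X n ω :=
            mul_le_mul_of_nonneg_right (min_le_left _ _) hx.le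
          exact (h3.trans h2).trans (by rw [hMp]; exact le_sup_left)
        · subst hn'
          rw [hMpN]
          nlinarith [min_le_right a 1]
    have h2 : X n ω ≤ (1 / min a 1) * (M⁺) n ω := by
      rw [one_div, ← div_eq_inv_mul, le_div_iff₀ hmin0]
      linarith [h1]
    refine h2.trans ?_
    have h3 : (M⁺) n ω ≤
        (Finset.range (N + 1)).sup' Finset.nonempty_range_add_one (fun k => (M⁺) k ω) :=
      Finset.le_sup' (fun k => (M⁺) k ω) (Finset.mem_range.2 (Nat.lt_succ_iff.2 hn))
    exact mul_le_mul_of_nonneg_left h3 (by positivity)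
  -- compare eLpNorms
  have hsupXnn : ∀ ω, 0 ≤ (Finset.range (N + 1)).sup' (by simp) (fun n => X n ω) := by
    intro ω
    exact (hpos ω).trans
      (Finset.le_sup' (fun n => X n ω) (Finset.mem_range.2 (Nat.lt_succ_self N)))
  have hsupMnn : ∀ ω, (0:ℝ) ≤
      (Finset.range (N + 1)).sup' Finset.nonempty_range_add_one (fun n => (M⁺) n ω) := by
    intro ω
    exact (hnn N ω).trans
      (Finset.le_sup' (fun n => (M⁺) n ω) (Finset.mem_range.2 (Nat.lt_succ_self N)))
  have hstep1 : eLpNorm (fun ω => (Finset.range (N + 1)).sup' (by simp) (fun n => X n ω))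
      (ENNReal.ofReal p) μ ≤
      eLpNorm ((1 / min a 1) • fun ω =>
        (Finset.range (N + 1)).sup' Finset.nonempty_range_add_one (fun n => (M⁺) n ω))
        (ENNReal.ofReal p) μ := by
    refine eLpNorm_mono_ae ?_
    filter_upwards [hptw] with ω hω
    rw [Real.norm_of_nonneg (hsupXnn ω)]
    refine hω.trans ?_
    exact le_abs_self _
  have hstep2 : eLpNorm ((1 / min a 1) • fun ω =>
        (Finset.range (N + 1)).sup' Finset.nonempty_range_add_one (fun n => (M⁺) n ω))
        (ENNReal.ofReal p) μ =
      ENNReal.ofReal (1 / min a 1) *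
        eLpNorm (fun ω =>
          (Finset.range (N + 1)).sup' Finset.nonempty_range_add_one (fun n => (M⁺) n ω))
          (ENNReal.ofReal p) μ := by
    rw [eLpNorm_const_smul]
    congr 1
    exact Real.enorm_eq_ofReal (by positivity : (0:ℝ) ≤ 1 / min a 1)
  refine (hstep1.trans_eq hstep2).trans ?_
  refine le_trans (mul_le_mul_right hdoob _) ?_
  rw [hMpN, ← mul_assoc, ← ENNReal.ofReal_mul (by positivity)]
end

section
/- Let T > 0 and let (Z_t, F_t, P), t ∈ [0,T], be a right-continuous adapted process with Z_T ≥ 0 integrable, satisfying E(Z_T | F_t) ≥ a Z_t a.s. for all 0 ≤ t < T, where a > 0. Then for every α > 0, P(sup_{0≤s≤T} Z_s ≥ α) ≤ (1/(α·min(a,1)))·E[Z_T · 1{sup_{0≤s≤T} Z_s ≥ α}]. -/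
/-!
For an event `C ∈ ℱ t` on which `Z t > c ≥ 0`, the hypothesis gives
`∫_C Z_T = ∫_C E(Z_T | ℱ t) ≥ a c P(C)` when `t < T`, and trivially `∫_C Z_T ≥ c P(C)` when
`t = T`. Splitting `E = {max_{t ∈ F} Z_t > c}` according to the first time of a finite set `F` at which
`c` is exceeded gives `min(a,1) c P(E) ≤ ∫_E Z_T`. It passes to countable sets of
times by monotone convergence, to all of `[0,T]` by right-continuity (rational times together with
`T` suffice), and to the non-strict level `α` by letting `c ↑ α`. The same bound at levels `m → ∞`
shows that almost every path is bounded on `[0,T]`, so the real supremum in the statement (which is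
`0` on unbounded paths) agrees a.s. with the true one.
-/

open MeasureTheory Filter Set Topology

section SetIntegralLimits

variable {Ω : Type*} {m0 : MeasurableSpace Ω} {μ : Measure Ω} [IsFiniteMeasure μ]
  {f : Ω → ℝ} {s : ℕ → Set Ω}

lemma mul_measureReal_iUnion_le_setIntegral_of_monotone (hf : Integrable f μ)
    (hs : ∀ n, MeasurableSet (s n)) (hmono : Monotone s) {c : ℝ}
    (h : ∀ n, c * μ.real (s n) ≤ ∫ ω in s n, f ω ∂μ) :
    c * μ.real (⋃ n, s n) ≤ ∫ ω in ⋃ n, s n, f ω ∂μ :=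
  le_of_tendsto_of_tendsto'
    (((ENNReal.tendsto_toReal (measure_ne_top μ _)).comp
      (tendsto_measure_iUnion_atTop hmono)).const_mul c)
    (tendsto_setIntegral_of_monotone hs hmono hf.integrableOn) h

lemma mul_measureReal_iInter_le_setIntegral_of_antitone (hf : Integrable f μ)
    (hs : ∀ n, MeasurableSet (s n)) (hanti : Antitone s) {c : ℕ → ℝ} {c₀ : ℝ}
    (hc : Tendsto c atTop (𝓝 c₀)) (h : ∀ n, c n * μ.real (s n) ≤ ∫ ω in s n, f ω ∂μ) :
    c₀ * μ.real (⋂ n, s n) ≤ ∫ ω in ⋂ n, s n, f ω ∂μ :=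
  le_of_tendsto_of_tendsto'
    (hc.mul ((ENNReal.tendsto_toReal (measure_ne_top μ _)).comp
      (tendsto_measure_iInter_atTop (fun n => (hs n).nullMeasurableSet) hanti
        ⟨0, measure_ne_top μ _⟩)))
    (tendsto_setIntegral_of_antitone hs hanti ⟨0, hf.integrableOn⟩) h

end SetIntegralLimits

lemma ContinuousWithinAt.exists_rat_mem_Ico_lt {f : ℝ → ℝ} {t T c : ℝ}
    (hf : ContinuousWithinAt f (Ici t) t) (htT : t < T) (hc : c < f t) :
    ∃ q : ℚ, (q : ℝ) ∈ Ico t T ∧ c < f q := by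
  have hnhds : f ⁻¹' Ioi c ∩ Ico t T ∈ 𝓝[>] t :=
    nhdsWithin_mono _ Ioi_subset_Ici_self (inter_mem (hf (Ioi_mem_nhds hc)) (Ico_mem_nhdsGE htT))
  obtain ⟨u, htu : t < u, hsub⟩ := mem_nhdsGT_iff_exists_Ioo_subset.1 hnhds
  obtain ⟨q, htq, hqu⟩ := exists_rat_btwn htu
  exact ⟨q, (hsub ⟨htq, hqu⟩).2, (hsub ⟨htq, hqu⟩).1⟩

lemma exists_mem_Icc_lt_iff_exists_rat {f : ℝ → ℝ} (hf : ∀ t, ContinuousWithinAt f (Ici t) t)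
    {T c : ℝ} :
    (∃ t ∈ Icc 0 T, c < f t) ↔ ∃ t ∈ Icc 0 T ∩ insert T (range ((↑) : ℚ → ℝ)), c < f t := by
  refine ⟨fun ⟨t, ht, hct⟩ => ?_, fun ⟨t, ht, hct⟩ => ⟨t, ht.1, hct⟩⟩
  rcases ht.2.eq_or_lt with rfl | htT
  · exact ⟨t, ⟨ht, mem_insert t _⟩, hct⟩
  · obtain ⟨q, hq, hcq⟩ := (hf t).exists_rat_mem_Ico_lt htT hct
    exact ⟨q, ⟨⟨ht.1.trans hq.1, hq.2.le⟩, mem_insert_of_mem _ (mem_range_self q)⟩, hcq⟩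

section MaximalInequality

variable {Ω : Type*} {m0 : MeasurableSpace Ω} {μ : Measure Ω} [IsFiniteMeasure μ]
  {T : ℝ} {ℱ : Filtration ℝ m0} {Z : ℝ → Ω → ℝ} {a c : ℝ}

lemma MeasureTheory.Adapted.measurableSet_exists_lt (hadp : Adapted ℱ Z) {D : Set ℝ}
    (hD : D.Countable) (c : ℝ) : MeasurableSet {ω | ∃ t ∈ D, c < Z t ω} := by
  have hunion : {ω | ∃ t ∈ D, c < Z t ω} = ⋃ t ∈ D, {ω | c < Z t ω} := by ext; simp
  rw [hunion]
  exact .biUnion hD fun t _ => ℱ.le t _ (hadp t measurableSet_Ioi)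

lemma min_mul_measureReal_le_setIntegral (hint : Integrable (Z T) μ) (ha : 0 ≤ a)
    (hcond : ∀ t, 0 ≤ t → t < T → (fun ω => a * Z t ω) ≤ᵐ[μ] μ[Z T | ℱ t])
    (hc : 0 ≤ c) {t : ℝ} (ht : t ∈ Icc 0 T) {C : Set Ω} (hC : MeasurableSet[ℱ t] C)
    (hCZ : ∀ ω ∈ C, c < Z t ω) :
    min a 1 * c * μ.real C ≤ ∫ ω in C, Z T ω ∂μ := by
  have hCm : MeasurableSet C := ℱ.le t _ hC
  rcases ht.2.eq_or_lt with rfl | htT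
  · calc min a 1 * c * μ.real C ≤ c * μ.real C := by
          gcongr; exact mul_le_of_le_one_left hc (min_le_right a 1)
      _ ≤ ∫ ω in C, Z t ω ∂μ := setIntegral_ge_of_const_le_real hCm (measure_ne_top μ C)
          (fun ω hω => (hCZ ω hω).le) hint.integrableOn
  · have hlower : (fun _ => a * c) ≤ᵐ[μ.restrict C] μ[Z T | ℱ t] := by
      filter_upwards [ae_restrict_of_ae (hcond t ht.1 htT), ae_restrict_mem hCm] with ω hω hωC
      exact (mul_le_mul_of_nonneg_left (hCZ ω hωC).le ha).trans hω
    calc min a 1 * c * μ.real C ≤ a * c * μ.real C := by gcongr; exact min_le_left a 1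
      _ = ∫ _ in C, a * c ∂μ := by rw [setIntegral_const, smul_eq_mul, mul_comm]
      _ ≤ ∫ ω in C, μ[Z T | ℱ t] ω ∂μ := setIntegral_mono_ae_restrict
          (integrableOn_const (measure_ne_top μ C)) integrable_condExp.integrableOn hlower
      _ = ∫ ω in C, Z T ω ∂μ := setIntegral_condExp (ℱ.le t) hint hC

lemma maximal_ineq_finset (hadp : Adapted ℱ Z) (hint : Integrable (Z T) μ) (ha : 0 ≤ a)
    (hcond : ∀ t, 0 ≤ t → t < T → (fun ω => a * Z t ω) ≤ᵐ[μ] μ[Z T | ℱ t])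
    (hc : 0 ≤ c) {F : Finset ℝ} (hF : ∀ t ∈ F, t ∈ Icc 0 T) :
    min a 1 * c * μ.real {ω | ∃ t ∈ F, c < Z t ω} ≤
      ∫ ω in {ω | ∃ t ∈ F, c < Z t ω}, Z T ω ∂μ := by
  set first : ℝ → Set Ω := fun t => {ω | c < Z t ω ∧ ∀ s ∈ F, s < t → Z s ω ≤ c}
  have hfirst : ∀ t, MeasurableSet[ℱ t] (first t) := by
    intro t
    have hbefore : {ω | ∀ s ∈ F, s < t → Z s ω ≤ c} = ⋂ s ∈ F, ⋂ (_ : s < t), {ω | Z s ω ≤ c} := by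
      ext; simp
    have hbefore_meas : MeasurableSet[ℱ t] {ω | ∀ s ∈ F, s < t → Z s ω ≤ c} := by
      rw [hbefore]
      exact Finset.measurableSet_biInter F fun s _ => .iInter fun hst =>
        ℱ.mono hst.le _ (hadp s measurableSet_Iic)
    exact (hadp t measurableSet_Ioi).inter hbefore_meas
  have hdisj : (F : Set ℝ).PairwiseDisjoint first := by
    intro s hs t ht hst
    rcases hst.lt_or_gt with hst | hts
    · exact disjoint_left.2 fun ω hωs hωt => (hωt.2 s hs hst).not_gt hωs.1
    · exact disjoint_left.2 fun ω hωs hωt => (hωs.2 t ht hts).not_gt hωt.1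
  have hunion : {ω | ∃ t ∈ F, c < Z t ω} = ⋃ t ∈ F, first t := by
    ext ω
    simp only [mem_ofPred_eq, mem_iUnion, exists_prop]
    refine ⟨fun hex => ?_, fun ⟨t, ht, hωt⟩ => ⟨t, ht, hωt.1⟩⟩
    have hne : (F.filter fun t => c < Z t ω).Nonempty := by
      simpa [Finset.filter_nonempty_iff] using hex
    obtain ⟨t, ht, hmin⟩ := (F.filter fun t => c < Z t ω).exists_min_image id hne
    rw [Finset.mem_filter] at ht
    exact ⟨t, ht.1, ht.2, fun s hs hst => not_lt.1 fun hcs =>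
      (hmin s (Finset.mem_filter.2 ⟨hs, hcs⟩)).not_gt hst⟩
  have hfirst_meas : ∀ t ∈ F, MeasurableSet (first t) := fun t _ => ℱ.le t _ (hfirst t)
  rw [hunion, measureReal_biUnion_finset hdisj hfirst_meas,
    integral_biUnion_finset F hfirst_meas hdisj fun t _ => hint.integrableOn, Finset.mul_sum]
  exact Finset.sum_le_sum fun t ht =>
    min_mul_measureReal_le_setIntegral hint ha hcond hc (hF t ht) (hfirst t) fun ω hω => hω.1

lemma maximal_ineq_countable (hadp : Adapted ℱ Z) (hint : Integrable (Z T) μ) (ha : 0 ≤ a)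
    (hcond : ∀ t, 0 ≤ t → t < T → (fun ω => a * Z t ω) ≤ᵐ[μ] μ[Z T | ℱ t])
    (hc : 0 ≤ c) {D : Set ℝ} (hD : D.Countable) (hDT : D ⊆ Icc 0 T) :
    min a 1 * c * μ.real {ω | ∃ t ∈ D, c < Z t ω} ≤
      ∫ ω in {ω | ∃ t ∈ D, c < Z t ω}, Z T ω ∂μ := by
  rcases D.eq_empty_or_nonempty with rfl | hne
  · simp
  obtain ⟨e, rfl⟩ := hD.exists_eq_range hne
  set F : ℕ → Finset ℝ := fun n => (Finset.range n).image e
  have hexhaust : {ω | ∃ t ∈ range e, c < Z t ω} = ⋃ n, {ω | ∃ t ∈ F n, c < Z t ω} := by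
    ext ω
    simp only [F, mem_ofPred_eq, mem_iUnion, exists_range_iff, Finset.mem_image, Finset.mem_range]
    exact ⟨fun ⟨i, hi⟩ => ⟨i + 1, e i, ⟨i, i.lt_succ_self, rfl⟩, hi⟩,
      fun ⟨_, _, ⟨i, _, rfl⟩, hi⟩ => ⟨i, hi⟩⟩
  rw [hexhaust]
  refine mul_measureReal_iUnion_le_setIntegral_of_monotone hint
    (fun n => hadp.measurableSet_exists_lt (F n).countable_toSet c) ?_
    (fun n => maximal_ineq_finset hadp hint ha hcond hc fun t ht => ?_)
  · intro m n hmn ω ⟨t, ht, hct⟩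
    exact ⟨t, Finset.image_subset_image (Finset.range_subset_range.2 hmn) ht, hct⟩
  · obtain ⟨i, -, rfl⟩ := Finset.mem_image.1 ht
    exact hDT (mem_range_self i)

lemma setOf_exists_Icc_lt_eq_rat
    (hrc : ∀ ω, ∀ t : ℝ, ContinuousWithinAt (fun s => Z s ω) (Ici t) t) (c : ℝ) :
    {ω | ∃ t ∈ Icc 0 T, c < Z t ω} =
      {ω | ∃ t ∈ Icc 0 T ∩ insert T (range ((↑) : ℚ → ℝ)), c < Z t ω} := by
  ext ω
  exact exists_mem_Icc_lt_iff_exists_rat (hrc ω)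

lemma measurableSet_exists_Icc_lt (hadp : Adapted ℱ Z)
    (hrc : ∀ ω, ∀ t : ℝ, ContinuousWithinAt (fun s => Z s ω) (Ici t) t) (c : ℝ) :
    MeasurableSet {ω | ∃ t ∈ Icc 0 T, c < Z t ω} := by
  rw [setOf_exists_Icc_lt_eq_rat hrc]
  exact hadp.measurableSet_exists_lt (((countable_range _).insert T).mono inter_subset_right) c

lemma maximal_ineq_Icc (hadp : Adapted ℱ Z)
    (hrc : ∀ ω, ∀ t : ℝ, ContinuousWithinAt (fun s => Z s ω) (Ici t) t)
    (hint : Integrable (Z T) μ) (ha : 0 ≤ a)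
    (hcond : ∀ t, 0 ≤ t → t < T → (fun ω => a * Z t ω) ≤ᵐ[μ] μ[Z T | ℱ t]) (hc : 0 ≤ c) :
    min a 1 * c * μ.real {ω | ∃ t ∈ Icc 0 T, c < Z t ω} ≤
      ∫ ω in {ω | ∃ t ∈ Icc 0 T, c < Z t ω}, Z T ω ∂μ := by
  rw [setOf_exists_Icc_lt_eq_rat hrc]
  exact maximal_ineq_countable hadp hint ha hcond hc
    (((countable_range _).insert T).mono inter_subset_right) inter_subset_left

lemma maximal_ineq_Icc_forall_lt (hadp : Adapted ℱ Z)
    (hrc : ∀ ω, ∀ t : ℝ, ContinuousWithinAt (fun s => Z s ω) (Ici t) t)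
    (hint : Integrable (Z T) μ) (ha : 0 ≤ a)
    (hcond : ∀ t, 0 ≤ t → t < T → (fun ω => a * Z t ω) ≤ᵐ[μ] μ[Z T | ℱ t])
    {α : ℝ} (hα : 0 < α) :
    min a 1 * α * μ.real {ω | ∀ c < α, ∃ t ∈ Icc 0 T, c < Z t ω} ≤
      ∫ ω in {ω | ∀ c < α, ∃ t ∈ Icc 0 T, c < Z t ω}, Z T ω ∂μ := by
  obtain ⟨β, hβmono, hβmem, hβlim⟩ := exists_seq_strictMono_tendsto' hα
  have hinter : {ω | ∀ c < α, ∃ t ∈ Icc 0 T, c < Z t ω} =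
      ⋂ k, {ω | ∃ t ∈ Icc 0 T, β k < Z t ω} := by
    ext ω
    simp only [mem_ofPred_eq, mem_iInter]
    refine ⟨fun h k => h _ (hβmem k).2, fun h c hc => ?_⟩
    obtain ⟨k, hk⟩ := (hβlim.eventually (lt_mem_nhds hc)).exists
    obtain ⟨t, ht, hβt⟩ := h k
    exact ⟨t, ht, hk.trans hβt⟩
  rw [hinter]
  exact mul_measureReal_iInter_le_setIntegral_of_antitone hint
    (fun k => measurableSet_exists_Icc_lt hadp hrc _)
    (fun k l hkl ω ⟨t, ht, hβt⟩ => ⟨t, ht, (hβmono.monotone hkl).trans_lt hβt⟩)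
    (hβlim.const_mul _) (fun k => maximal_ineq_Icc hadp hrc hint ha hcond (hβmem k).1.le)

lemma ae_bddAbove_range_Icc (hadp : Adapted ℱ Z)
    (hrc : ∀ ω, ∀ t : ℝ, ContinuousWithinAt (fun s => Z s ω) (Ici t) t)
    (hint : Integrable (Z T) μ) (ha : 0 < a)
    (hcond : ∀ t, 0 ≤ t → t < T → (fun ω => a * Z t ω) ≤ᵐ[μ] μ[Z T | ℱ t]) :
    ∀ᵐ ω ∂μ, BddAbove (range fun t : Icc (0 : ℝ) T => Z t ω) := by
  set N := {ω | ¬BddAbove (range fun t : Icc (0 : ℝ) T => Z t ω)}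
  have hbound : ∀ m : ℕ, min a 1 * m * μ.real N ≤ ∫ ω, |Z T ω| ∂μ := by
    intro m
    have hNsub : N ⊆ {ω | ∃ t ∈ Icc 0 T, (m : ℝ) < Z t ω} := by
      intro ω hω
      by_contra hle
      exact hω ⟨m, forall_mem_range.2 fun t => not_lt.1 fun hmt => hle ⟨t, t.2, hmt⟩⟩
    calc min a 1 * m * μ.real N
        ≤ min a 1 * m * μ.real {ω | ∃ t ∈ Icc 0 T, (m : ℝ) < Z t ω} := by
          gcongr
          exact measure_ne_top μ _
      _ ≤ ∫ ω in {ω | ∃ t ∈ Icc 0 T, (m : ℝ) < Z t ω}, Z T ω ∂μ :=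
          maximal_ineq_Icc hadp hrc hint ha.le hcond m.cast_nonneg
      _ ≤ ∫ ω in {ω | ∃ t ∈ Icc 0 T, (m : ℝ) < Z t ω}, |Z T ω| ∂μ :=
          setIntegral_mono hint.integrableOn hint.abs.integrableOn fun ω => le_abs_self _
      _ ≤ ∫ ω, |Z T ω| ∂μ :=
          setIntegral_le_integral hint.abs (Eventually.of_forall fun ω => abs_nonneg _)
  have hN : μ.real N = 0 := by
    by_contra hN
    have hpos : 0 < min a 1 * μ.real N :=
      mul_pos (lt_min ha one_pos) (measureReal_nonneg.lt_of_ne' hN)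
    obtain ⟨m, hm⟩ := exists_nat_gt ((∫ ω, |Z T ω| ∂μ) / (min a 1 * μ.real N))
    rw [div_lt_iff₀ hpos] at hm
    linarith [hbound m]
  exact ae_iff.2 ((measureReal_eq_zero_iff).1 hN)

end MaximalInequality

theorem improved_doob_continuous_general
    {Ω : Type*} {m0 : MeasurableSpace Ω} {μ : Measure Ω} [IsProbabilityMeasure μ]
    {T : ℝ} (hT : 0 < T) {ℱ : Filtration ℝ m0} {Z : ℝ → Ω → ℝ}
    (hadp : Adapted ℱ Z)
    (hrc : ∀ ω, ∀ t : ℝ, ContinuousWithinAt (fun s => Z s ω) (Ici t) t)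
    (hint : Integrable (Z T) μ)
    {a : ℝ} (ha : 0 < a)
    (hcond : ∀ t, 0 ≤ t → t < T → (fun ω => a * Z t ω) ≤ᵐ[μ] μ[Z T | ℱ t])
    (α : ℝ) (hα : 0 < α) :
    (μ {ω | α ≤ ⨆ s : Icc (0 : ℝ) T, Z s ω}).toReal ≤
      (1 / (α * min a 1)) * ∫ ω in {ω | α ≤ ⨆ s : Icc (0 : ℝ) T, Z s ω}, Z T ω ∂μ := by
  have : Nonempty (Icc (0 : ℝ) T) := ⟨⟨0, le_rfl, hT.le⟩⟩
  have hsup : {ω | α ≤ ⨆ s : Icc (0 : ℝ) T, Z s ω} =ᵐ[μ]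
      {ω | ∀ c < α, ∃ t ∈ Icc 0 T, c < Z t ω} := by
    filter_upwards [ae_bddAbove_range_Icc hadp hrc hint ha hcond] with ω hbdd
    change (α ≤ ⨆ s : Icc (0 : ℝ) T, Z s ω) = ∀ c < α, ∃ t ∈ Icc 0 T, c < Z t ω
    simp only [← forall_lt_iff_le, lt_ciSup_iff hbdd, Subtype.exists, exists_prop]
  have hmax := maximal_ineq_Icc_forall_lt hadp hrc hint ha.le hcond hα
  rw [measureReal_def] at hmax
  rw [measure_congr hsup, setIntegral_congr_set hsup, one_div_mul_eq_div,
    le_div_iff₀ (mul_pos hα (lt_min ha one_pos))]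
  linarith

/-- **Improved Doob inequality (continuous time).** If `(Z t)_{t ∈ [0,T]}` is adapted and
right-continuous, `Z T ≥ 0` is integrable, and `E(Z T | ℱ t) ≥ a • Z t` a.s. for all
`0 ≤ t < T` with `a > 0`, then for `α > 0`,
`P(sup_{0 ≤ s ≤ T} Z s ≥ α) ≤ (1/(α * min a 1)) * E[Z T ; sup_{0 ≤ s ≤ T} Z s ≥ α]`. -/
theorem improved_doob_continuous
    {Ω : Type*} {m0 : MeasurableSpace Ω} {μ : Measure Ω} [IsProbabilityMeasure μ]
    {T : ℝ} (hT : 0 < T) {ℱ : Filtration ℝ m0} {Z : ℝ → Ω → ℝ}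
    (hadp : Adapted ℱ Z)
    (hrc : ∀ ω, ∀ t : ℝ, ContinuousWithinAt (fun s => Z s ω) (Ici t) t)
    (hpos : 0 ≤ Z T) (hint : Integrable (Z T) μ)
    {a : ℝ} (ha : 0 < a)
    (hcond : ∀ t, 0 ≤ t → t < T → (fun ω => a * Z t ω) ≤ᵐ[μ] μ[Z T | ℱ t])
    (α : ℝ) (hα : 0 < α) :
    (μ {ω | α ≤ ⨆ s : Icc (0 : ℝ) T, Z s ω}).toReal ≤
      (1 / (α * min a 1)) * ∫ ω in {ω | α ≤ ⨆ s : Icc (0 : ℝ) T, Z s ω}, Z T ω ∂μ :=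
  improved_doob_continuous_general hT hadp hrc hint ha hcond α hα
end

section
/- Let (S_n, F_n, P), 0 ≤ n ≤ N, be a random walk with S_0 = 0 and independent steps Y_n := S_{n+1} − S_n. Set φ_i := E(e^{Y_i}) and π_n := ∏_{i=n}^{N−1} φ_i (with π_N := 1). Then for every α ∈ ℝ, P(max_{0≤n≤N} S_n ≥ α) ≤ e^{−α}·(max_{0≤n≤N} π_n^{−1})·E[e^{S_N} · 1{max_{0≤n≤N} S_n ≥ α}]. -/
/-!
Let `ℱ n = σ(Y₀, …, Y_{n-1})`. Since the steps after time `n` are independent of `ℱ n`,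
`∫_A e^{S N} = π n ∫_A e^{S n}` for every `A ∈ ℱ n`, i.e. `E[e^{S N} | ℱ n] = π n e^{S n}`.
Hence `Z n = e^{S n}` satisfies `E[Z N | ℱ n] ≥ a Z n` with `a = min π n = (max π n⁻¹)⁻¹`,
and Doob's argument goes through for such processes: split `{max Z n ≥ ε}` according to the
first time `n` at which `Z` reaches `ε`; that event lies in `ℱ n`, and on it `ε ≤ Z n`, so
`a ε P(first hit at n) ≤ a ∫ Z n ≤ ∫ Z N` over it. Take `ε = e^α`.
-/

open MeasureTheory ProbabilityTheory Finset Function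

section FirstHitting

variable {Ω : Type*} (Z : ℕ → Ω → ℝ) (ε : ℝ)

def firstHitSet (n : ℕ) : Set Ω := {ω | ε ≤ Z n ω ∧ ∀ k < n, Z k ω < ε}

lemma setOf_le_sup'_eq_biUnion_firstHitSet (N : ℕ) :
    {ω | ε ≤ (range (N + 1)).sup' nonempty_range_add_one fun n => Z n ω} =
      ⋃ n ∈ range (N + 1), firstHitSet Z ε n := by
  ext ω
  simp only [Set.mem_ofPred_eq, le_sup'_iff, Set.mem_iUnion, firstHitSet, exists_prop]
  constructor
  · rintro ⟨n, hn, hεn⟩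
    have hex : ∃ k, ε ≤ Z k ω := ⟨n, hεn⟩
    exact ⟨Nat.find hex, mem_range.2 ((Nat.find_le hεn).trans_lt (mem_range.1 hn)),
      Nat.find_spec hex, fun k hk => lt_of_not_ge (Nat.find_min hex hk)⟩
  · rintro ⟨n, hn, hεn, -⟩
    exact ⟨n, hn, hεn⟩

lemma pairwise_disjoint_firstHitSet : Pairwise (Disjoint on firstHitSet Z ε) :=
  (pairwise_disjoint_on _).2 fun m _ hmn =>
    Set.disjoint_left.2 fun _ hm hn => (hn.2 m hmn).not_ge hm.1

variable {m0 : MeasurableSpace Ω} {ℱ : Filtration ℕ m0}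

lemma measurableSet_firstHitSet (hZ : Adapted ℱ Z) (n : ℕ) :
    MeasurableSet[ℱ n] (firstHitSet Z ε n) := by
  have hlt : ∀ k < n, MeasurableSet[ℱ n] {ω | Z k ω < ε} := fun k hk =>
    measurableSet_lt ((hZ k).mono (ℱ.mono hk.le) le_rfl) measurable_const
  have hset : firstHitSet Z ε n = {ω | ε ≤ Z n ω} ∩ ⋂ k, ⋂ (_ : k < n), {ω | Z k ω < ε} := by
    ext; simp [firstHitSet]
  rw [hset]
  exact (measurableSet_le measurable_const (hZ n)).inter (.iInter fun k => .iInter (hlt k))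

end FirstHitting

section MaximalInequality

variable {Ω : Type*} {m0 : MeasurableSpace Ω} {μ : Measure Ω}

theorem maximal_ineq_of_setIntegral_le [IsFiniteMeasure μ] {ℱ : Filtration ℕ m0}
    {Z : ℕ → Ω → ℝ} (hZ : Adapted ℱ Z) (hint : ∀ n, Integrable (Z n) μ) {a : ℝ} (ha : 0 ≤ a)
    {N : ℕ} (hN : ∀ n ≤ N, ∀ A, MeasurableSet[ℱ n] A →
      a * ∫ ω in A, Z n ω ∂μ ≤ ∫ ω in A, Z N ω ∂μ) (ε : ℝ) :
    a * ε * μ.real {ω | ε ≤ (range (N + 1)).sup' nonempty_range_add_one fun n => Z n ω} ≤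
      ∫ ω in {ω | ε ≤ (range (N + 1)).sup' nonempty_range_add_one fun n => Z n ω}, Z N ω ∂μ := by
  have hmeas n : MeasurableSet (firstHitSet Z ε n) :=
    ℱ.le n _ (measurableSet_firstHitSet Z ε hZ n)
  have hdisj := (pairwise_disjoint_firstHitSet Z ε).set_pairwise (range (N + 1) : Set ℕ)
  rw [setOf_le_sup'_eq_biUnion_firstHitSet, measureReal_biUnion_finset hdisj (fun n _ => hmeas n),
    integral_biUnion_finset _ (fun n _ => hmeas n) hdisj fun n _ => (hint N).integrableOn,
    mul_sum]
  refine sum_le_sum fun n hn => ?_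
  calc a * ε * μ.real (firstHitSet Z ε n)
      ≤ a * ∫ ω in firstHitSet Z ε n, Z n ω ∂μ := by
        rw [mul_assoc]
        exact mul_le_mul_of_nonneg_left (setIntegral_ge_of_const_le_real (hmeas n)
          (measure_ne_top μ _) (fun ω hω => hω.1) (hint n).integrableOn) ha
    _ ≤ ∫ ω in firstHitSet Z ε n, Z N ω ∂μ :=
        hN n (Nat.lt_succ_iff.1 (mem_range.1 hn)) _ (measurableSet_firstHitSet Z ε hZ n)

end MaximalInequality

section RandomWalk

variable {Ω : Type*} {m0 : MeasurableSpace Ω} {μ : Measure Ω} {Y : ℕ → Ω → ℝ}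

def stepFiltration (hY : ∀ i, Measurable (Y i)) : Filtration ℕ m0 where
  seq n := ⨆ i ∈ Set.Iio n, MeasurableSpace.comap (Y i) inferInstance
  mono' _ _ hmn := biSup_mono fun _ hi => lt_of_lt_of_le hi hmn
  le' _ := iSup₂_le fun i _ => (hY i).comap_le

lemma measurable_sum_iSup_comap {s : Finset ℕ} {T : Set ℕ} (hsT : ↑s ⊆ T) :
    Measurable[⨆ i ∈ T, MeasurableSpace.comap (Y i) inferInstance] fun ω => ∑ i ∈ s, Y i ω :=
  Finset.measurable_sum _ fun i hi =>
    (comap_measurable (Y i)).mono (le_iSup₂ (f := fun i (_ : i ∈ T) =>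
      MeasurableSpace.comap (Y i) inferInstance) i (hsT hi)) le_rfl

lemma adapted_exp_sum_range (hY : ∀ i, Measurable (Y i)) :
    Adapted (stepFiltration hY) fun n ω => Real.exp (∑ i ∈ range n, Y i ω) := fun _ =>
  (measurable_sum_iSup_comap (by simp)).exp

lemma ProbabilityTheory.iIndepFun.integrable_exp_sum [IsFiniteMeasure μ]
    (hindep : iIndepFun Y μ) (hY : ∀ i, Measurable (Y i))
    (hint : ∀ i, Integrable (fun ω => Real.exp (Y i ω)) μ) (s : Finset ℕ) :
    Integrable (fun ω => Real.exp (∑ i ∈ s, Y i ω)) μ := by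
  simpa using hindep.integrable_exp_mul_sum (t := 1) hY (s := s) (by simpa using fun i _ => hint i)

lemma ProbabilityTheory.iIndepFun.integral_exp_sum (hindep : iIndepFun Y μ)
    (hY : ∀ i, Measurable (Y i)) (s : Finset ℕ) :
    ∫ ω, Real.exp (∑ i ∈ s, Y i ω) ∂μ = ∏ i ∈ s, ∫ ω, Real.exp (Y i ω) ∂μ := by
  simpa [mgf] using hindep.mgf_sum (t := 1) hY s

lemma ProbabilityTheory.iIndepFun.setIntegral_exp_sum_range (hindep : iIndepFun Y μ)
    (hY : ∀ i, Measurable (Y i)) {n N : ℕ} (hn : n ≤ N) {A : Set Ω}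
    (hA : MeasurableSet[stepFiltration hY n] A) :
    ∫ ω in A, Real.exp (∑ i ∈ range N, Y i ω) ∂μ =
      (∏ i ∈ Ico n N, ∫ ω, Real.exp (Y i ω) ∂μ) *
        ∫ ω in A, Real.exp (∑ i ∈ range n, Y i ω) ∂μ := by
  set past := A.indicator fun ω => Real.exp (∑ i ∈ range n, Y i ω)
  set future := fun ω => Real.exp (∑ i ∈ Ico n N, Y i ω)
  have hpast : Measurable[stepFiltration hY n] past := (adapted_exp_sum_range hY n).indicator hA
  have hfuture : Measurable[⨆ i ∈ Set.Ico n N, MeasurableSpace.comap (Y i) inferInstance] future :=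
    (measurable_sum_iSup_comap (by simp)).exp
  have hindep' : past ⟂ᵢ[μ] future := (IndepFun_iff_Indep _ _ _).2 <|
    indep_of_indep_of_le (indep_iSup_of_disjoint (fun i => (hY i).comap_le) hindep.iIndep
      ((Set.Iio_disjoint_Ici le_rfl).mono_right Set.Ico_subset_Ici_self))
      hpast.comap_le hfuture.comap_le
  have hsplit : (A.indicator fun ω => Real.exp (∑ i ∈ range N, Y i ω)) = past * future := by
    ext ω
    by_cases hω : ω ∈ A
    · simp [past, future, hω, ← sum_range_add_sum_Ico _ hn, Real.exp_add]
    · simp [past, hω]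
  have hA' : MeasurableSet A := (stepFiltration hY).le n _ hA
  rw [← integral_indicator hA', hsplit, hindep'.integral_mul_eq_mul_integral
    (hpast.mono ((stepFiltration hY).le n) le_rfl).aestronglyMeasurable
    (hfuture.mono (iSup₂_le fun i _ => (hY i).comap_le) le_rfl).aestronglyMeasurable,
    integral_indicator hA', mul_comm, hindep.integral_exp_sum hY]

end RandomWalk

/-- **Random walks with time-inhomogeneous independent steps.** With `S n = ∑_{i<n} Y i`,
`φ i = E e^{Y i}`, `π n = ∏_{i=n}^{N-1} φ i`, one has for all `α`:
`P(max_{0 ≤ n ≤ N} S n ≥ α) ≤ e^{-α} (max_{0 ≤ n ≤ N} π n⁻¹) E[e^{S N} ; max S n ≥ α]`. -/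
theorem random_walk_inhomogeneous_maximal
    {Ω : Type*} {m0 : MeasurableSpace Ω} {μ : Measure Ω} [IsProbabilityMeasure μ]
    {N : ℕ} {Y : ℕ → Ω → ℝ}
    (hmeas : ∀ i, Measurable (Y i))
    (hindep : iIndepFun Y μ)
    (S : ℕ → Ω → ℝ) (hS : ∀ n ω, S n ω = ∑ i ∈ Finset.range n, Y i ω)
    (φ : ℕ → ℝ) (hφ : ∀ i, φ i = ∫ ω, Real.exp (Y i ω) ∂μ)
    (hφ_pos : ∀ i, 0 < φ i) (hφ_int : ∀ i, Integrable (fun ω => Real.exp (Y i ω)) μ)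
    (π : ℕ → ℝ) (hπ : ∀ n, π n = ∏ i ∈ Finset.Ico n N, φ i)
    (α : ℝ) :
    (μ {ω | α ≤ (Finset.range (N + 1)).sup' (by simp) (fun n => S n ω)}).toReal ≤
      Real.exp (-α) * ((Finset.range (N + 1)).sup' (by simp) fun n => (π n)⁻¹) *
        ∫ ω in {ω | α ≤ (Finset.range (N + 1)).sup' (by simp) (fun n => S n ω)},
          Real.exp (S N ω) ∂μ := by
  set M := (range (N + 1)).sup' nonempty_range_add_one fun n => (π n)⁻¹
  have hM : 0 < M :=
    lt_of_lt_of_le (by simp [hπ]) (le_sup' (fun n => (π n)⁻¹) (self_mem_range_succ N))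
  have hexp_event : {ω | α ≤ (range (N + 1)).sup' nonempty_range_add_one fun n => S n ω} =
      {ω | Real.exp α ≤ (range (N + 1)).sup' nonempty_range_add_one fun n => Real.exp (S n ω)} := by
    ext; simp [le_sup'_iff]
  obtain rfl : S = fun n ω => ∑ i ∈ range n, Y i ω := funext fun n => funext (hS n)
  have hcond : ∀ n ≤ N, ∀ A, MeasurableSet[stepFiltration hmeas n] A →
      M⁻¹ * ∫ ω in A, Real.exp (∑ i ∈ range n, Y i ω) ∂μ ≤
        ∫ ω in A, Real.exp (∑ i ∈ range N, Y i ω) ∂μ := fun n hn A hA => by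
    rw [hindep.setIntegral_exp_sum_range hmeas hn hA, ← prod_congr rfl fun i _ => hφ i, ← hπ]
    gcongr ?_ * _
    exact inv_le_of_inv_le₀ (hπ n ▸ prod_pos fun i _ => hφ_pos i)
      (le_sup' (fun n => (π n)⁻¹) (mem_range_succ_iff.2 hn))
  have hdoob := maximal_ineq_of_setIntegral_le (adapted_exp_sum_range hmeas)
    (fun n => hindep.integrable_exp_sum hmeas hφ_int (range n)) (inv_nonneg.2 hM.le) hcond
    (Real.exp α)
  rw [← hexp_event] at hdoob
  calc (μ _).toReal = Real.exp (-α) * M * (M⁻¹ * Real.exp α * μ.real _) := by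
        rw [Real.exp_neg, ← measureReal_def]; field_simp
    _ ≤ _ := by gcongr
end

section
/- Let I ⊆ ℝ be an interval and δ ≥ 0. A function f : I → ℝ is δ-convex (i.e., f(tx+(1−t)y) ≤ t f(x) + (1−t) f(y) + δ for all x, y ∈ I, t ∈ [0,1]) if and only if f = g + h where g : I → ℝ is convex and sup_{x∈I} |h(x)| ≤ δ/2. -/
/-!
The convex function is the lower envelope `g x = inf { s f a + t f b }` over all ways of writing
`x = s a + t b` as a convex combination of two points of `I`. Taking `a = b = x` gives `g ≤ f`,
and `δ`-convexity says exactly `f - δ ≤ g`, so `g + δ/2` is within `δ/2` of `f`.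

The envelope is convex because on the line a convex combination of two chord values (four
points) is dominated by a chord value over two of those four points with the same barycentre.
This reduction is done three points at a time: the weight changes on three points that fix the
total mass and the barycentre form a line, and moving along it in the direction that does not
increase the `f`-value until one weight vanishes leaves a two-point combination.
-/

theorem convexOn_sInf {E : Type*} [AddCommMonoid E] [Module ℝ E] {I : Set E}
    (hI : Convex ℝ I) {S : E → Set ℝ} (hne : ∀ x ∈ I, (S x).Nonempty)
    (hbdd : ∀ x ∈ I, BddBelow (S x))
    (hS : ∀ x ∈ I, ∀ y ∈ I, ∀ a b : ℝ, 0 ≤ a → 0 ≤ b → a + b = 1 →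
      ∀ v ∈ S x, ∀ w ∈ S y, ∃ u ∈ S (a • x + b • y), u ≤ a * v + b * w) :
    ConvexOn ℝ I fun x => sInf (S x) := by
  refine ⟨hI, fun x hx y hy a b ha hb hab => le_of_forall_pos_le_add fun ε hε => ?_⟩
  obtain ⟨v, hv, hvε⟩ := exists_lt_of_csInf_lt (hne x hx) (lt_add_of_pos_right (sInf (S x)) hε)
  obtain ⟨w, hw, hwε⟩ := exists_lt_of_csInf_lt (hne y hy) (lt_add_of_pos_right (sInf (S y)) hε)
  obtain ⟨u, hu, huvw⟩ := hS x hx y hy a b ha hb hab v hv w hw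
  calc sInf (S (a • x + b • y)) ≤ u := csInf_le (hbdd _ (hI hx hy ha hb hab)) hu
    _ ≤ a * v + b * w := huvw
    _ ≤ a • sInf (S x) + b • sInf (S y) + ε := by
      simp only [smul_eq_mul]
      nlinarith

theorem exists_two_point_le_three_point_of_le (f : ℝ → ℝ) {s : Set ℝ} {p₁ p₂ p₃ l₁ l₂ l₃ : ℝ}
    (hp₁ : p₁ ∈ s) (hp₂ : p₂ ∈ s) (hp₃ : p₃ ∈ s) (hl₁ : 0 ≤ l₁) (hl₂ : 0 ≤ l₂) (hl₃ : 0 ≤ l₃)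
    (h₁₂ : p₁ ≤ p₂) (h₂₃ : p₂ ≤ p₃) :
    ∃ q₁ ∈ s, ∃ q₂ ∈ s, ∃ μ₁ μ₂ : ℝ, 0 ≤ μ₁ ∧ 0 ≤ μ₂ ∧ μ₁ + μ₂ = l₁ + l₂ + l₃ ∧
      μ₁ * q₁ + μ₂ * q₂ = l₁ * p₁ + l₂ * p₂ + l₃ * p₃ ∧
      μ₁ * f q₁ + μ₂ * f q₂ ≤ l₁ * f p₁ + l₂ * f p₂ + l₃ * f p₃ := by
  rcases h₁₂.eq_or_lt with rfl | h₁₂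
  · exact ⟨p₁, hp₁, p₃, hp₃, l₁ + l₂, l₃, by positivity, hl₃, by ring, by ring, le_of_eq (by ring)⟩
  rcases h₂₃.eq_or_lt with rfl | h₂₃
  · exact ⟨p₁, hp₁, p₂, hp₂, l₁, l₂ + l₃, hl₁, by positivity, by ring, by ring, le_of_eq (by ring)⟩
  -- Shifting the weights by `σ • (p₃ - p₂, p₁ - p₃, p₂ - p₁)` keeps the mass and the
  -- barycentre and changes the `f`-value by `σ * D`.
  set D := (p₃ - p₂) * f p₁ + (p₁ - p₃) * f p₂ + (p₂ - p₁) * f p₃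
  rcases le_total D 0 with hD | hD
  · set σ := l₂ / (p₃ - p₁)
    have hσ : σ * (p₃ - p₁) = l₂ := div_mul_cancel₀ _ (by linarith)
    have hσ₀ : 0 ≤ σ := div_nonneg hl₂ (by linarith)
    refine ⟨p₁, hp₁, p₃, hp₃, l₁ + σ * (p₃ - p₂), l₃ + σ * (p₂ - p₁), ?_, ?_,
      by linear_combination hσ, by linear_combination p₂ * hσ, ?_⟩
    · nlinarith
    · nlinarith
    · linear_combination f p₂ * hσ + mul_nonpos_of_nonneg_of_nonpos hσ₀ hD
  rcases le_total (l₁ * (p₂ - p₁)) (l₃ * (p₃ - p₂)) with hl | hl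
  · set σ := l₁ / (p₃ - p₂)
    have hσ : σ * (p₃ - p₂) = l₁ := div_mul_cancel₀ _ (by linarith)
    have hσ₀ : 0 ≤ σ := div_nonneg hl₁ (by linarith)
    refine ⟨p₂, hp₂, p₃, hp₃, l₂ + σ * (p₃ - p₁), l₃ - σ * (p₂ - p₁), ?_, ?_,
      by linear_combination hσ, by linear_combination p₁ * hσ, ?_⟩
    · nlinarith
    · nlinarith
    · linear_combination f p₁ * hσ + neg_nonpos.mpr (mul_nonneg hσ₀ hD)
  · set σ := l₃ / (p₂ - p₁)
    have hσ : σ * (p₂ - p₁) = l₃ := div_mul_cancel₀ _ (by linarith)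
    have hσ₀ : 0 ≤ σ := div_nonneg hl₃ (by linarith)
    refine ⟨p₁, hp₁, p₂, hp₂, l₁ - σ * (p₃ - p₂), l₂ + σ * (p₃ - p₁), ?_, ?_,
      by linear_combination hσ, by linear_combination p₃ * hσ, ?_⟩
    · nlinarith
    · nlinarith
    · linear_combination f p₃ * hσ + neg_nonpos.mpr (mul_nonneg hσ₀ hD)

theorem exists_two_point_le_three_point (f : ℝ → ℝ) {s : Set ℝ} {p₁ p₂ p₃ l₁ l₂ l₃ : ℝ}
    (hp₁ : p₁ ∈ s) (hp₂ : p₂ ∈ s) (hp₃ : p₃ ∈ s) (hl₁ : 0 ≤ l₁) (hl₂ : 0 ≤ l₂) (hl₃ : 0 ≤ l₃) :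
    ∃ q₁ ∈ s, ∃ q₂ ∈ s, ∃ μ₁ μ₂ : ℝ, 0 ≤ μ₁ ∧ 0 ≤ μ₂ ∧ μ₁ + μ₂ = l₁ + l₂ + l₃ ∧
      μ₁ * q₁ + μ₂ * q₂ = l₁ * p₁ + l₂ * p₂ + l₃ * p₃ ∧
      μ₁ * f q₁ + μ₂ * f q₂ ≤ l₁ * f p₁ + l₂ * f p₂ + l₃ * f p₃ := by
  wlog h₁₃ : p₁ ≤ p₃ generalizing p₁ p₃ l₁ l₃
  · obtain ⟨q₁, hq₁, q₂, hq₂, μ₁, μ₂, hμ₁, hμ₂, hm, hc, hv⟩ :=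
      this hp₃ hp₁ hl₃ hl₁ (le_of_not_ge h₁₃)
    exact ⟨q₁, hq₁, q₂, hq₂, μ₁, μ₂, hμ₁, hμ₂, by linarith, by linarith, by linarith⟩
  rcases le_total p₂ p₁ with h₂₁ | h₁₂
  · obtain ⟨q₁, hq₁, q₂, hq₂, μ₁, μ₂, hμ₁, hμ₂, hm, hc, hv⟩ :=
      exists_two_point_le_three_point_of_le f hp₂ hp₁ hp₃ hl₂ hl₁ hl₃ h₂₁ h₁₃
    exact ⟨q₁, hq₁, q₂, hq₂, μ₁, μ₂, hμ₁, hμ₂, by linarith, by linarith, by linarith⟩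
  rcases le_total p₂ p₃ with h₂₃ | h₃₂
  · exact exists_two_point_le_three_point_of_le f hp₁ hp₂ hp₃ hl₁ hl₂ hl₃ h₁₂ h₂₃
  · obtain ⟨q₁, hq₁, q₂, hq₂, μ₁, μ₂, hμ₁, hμ₂, hm, hc, hv⟩ :=
      exists_two_point_le_three_point_of_le f hp₁ hp₃ hp₂ hl₁ hl₃ hl₂ h₁₃ h₃₂
    exact ⟨q₁, hq₁, q₂, hq₂, μ₁, μ₂, hμ₁, hμ₂, by linarith, by linarith, by linarith⟩

def DeltaConvexOn (I : Set ℝ) (δ : ℝ) (f : ℝ → ℝ) : Prop :=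
  ∀ x ∈ I, ∀ y ∈ I, ∀ t : ℝ, 0 ≤ t → t ≤ 1 →
    f (t * x + (1 - t) * y) ≤ t * f x + (1 - t) * f y + δ

def chordValues (f : ℝ → ℝ) (s : Set ℝ) (x : ℝ) : Set ℝ :=
  {v | ∃ a ∈ s, ∃ b ∈ s, ∃ μ ν : ℝ, 0 ≤ μ ∧ 0 ≤ ν ∧ μ + ν = 1 ∧
    μ * a + ν * b = x ∧ μ * f a + ν * f b = v}

theorem self_mem_chordValues (f : ℝ → ℝ) {s : Set ℝ} {x : ℝ} (hx : x ∈ s) :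
    f x ∈ chordValues f s x :=
  ⟨x, hx, x, hx, 1, 0, zero_le_one, le_rfl, add_zero 1, by ring, by ring⟩

theorem exists_mem_chordValues_le {f : ℝ → ℝ} {s : Set ℝ} {x y v w a b : ℝ}
    (hv : v ∈ chordValues f s x) (hw : w ∈ chordValues f s y) (ha : 0 ≤ a) (hb : 0 ≤ b)
    (hab : a + b = 1) : ∃ u ∈ chordValues f s (a * x + b * y), u ≤ a * v + b * w := by
  obtain ⟨p₁, hp₁, p₂, hp₂, t₁, t₂, ht₁, ht₂, ht, rfl, rfl⟩ := hv
  obtain ⟨p₃, hp₃, p₄, hp₄, t₃, t₄, ht₃, ht₄, ht', rfl, rfl⟩ := hw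
  obtain ⟨q₁, hq₁, q₂, hq₂, μ₁, μ₂, hμ₁, hμ₂, hμ, hμc, hμv⟩ :=
    exists_two_point_le_three_point f hp₁ hp₂ hp₃
      (mul_nonneg ha ht₁) (mul_nonneg ha ht₂) (mul_nonneg hb ht₃)
  obtain ⟨r₁, hr₁, r₂, hr₂, κ₁, κ₂, hκ₁, hκ₂, hκ, hκc, hκv⟩ :=
    exists_two_point_le_three_point f hq₁ hq₂ hp₄ hμ₁ hμ₂ (mul_nonneg hb ht₄)
  refine ⟨_, ⟨r₁, hr₁, r₂, hr₂, κ₁, κ₂, hκ₁, hκ₂, ?_, ?_, rfl⟩, by linarith⟩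
  · linear_combination hκ + hμ + a * ht + b * ht' + hab
  · linear_combination hκc + hμc

theorem DeltaConvexOn.sub_le_of_mem_chordValues {I : Set ℝ} {δ : ℝ} {f : ℝ → ℝ}
    (hf : DeltaConvexOn I δ f) {x v : ℝ} (hv : v ∈ chordValues f I x) : f x - δ ≤ v := by
  obtain ⟨a, ha, b, hb, μ, ν, hμ, hν, hμν, rfl, rfl⟩ := hv
  obtain rfl : ν = 1 - μ := by linarith
  linarith [hf a ha b hb μ hμ (by linarith)]

theorem DeltaConvexOn.exists_convexOn_abs_sub_le {I : Set ℝ} (hI : Convex ℝ I) {δ : ℝ}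
    {f : ℝ → ℝ} (hf : DeltaConvexOn I δ f) :
    ∃ g : ℝ → ℝ, ConvexOn ℝ I g ∧ ∀ x ∈ I, |f x - g x| ≤ δ / 2 := by
  have hbdd : ∀ x ∈ I, BddBelow (chordValues f I x) := fun x _ =>
    ⟨f x - δ, fun _ hv => hf.sub_le_of_mem_chordValues hv⟩
  have hne : ∀ x ∈ I, (chordValues f I x).Nonempty := fun x hx =>
    ⟨f x, self_mem_chordValues f hx⟩
  have hconv : ConvexOn ℝ I fun x => sInf (chordValues f I x) :=
    convexOn_sInf hI hne hbdd fun _ _ _ _ _ _ ha hb hab _ hv _ hw =>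
      exists_mem_chordValues_le hv hw ha hb hab
  refine ⟨fun x => sInf (chordValues f I x) + δ / 2, hconv.add_const _, fun x hx => ?_⟩
  have hle : sInf (chordValues f I x) ≤ f x := csInf_le (hbdd x hx) (self_mem_chordValues f hx)
  have hge : f x - δ ≤ sInf (chordValues f I x) :=
    le_csInf (hne x hx) fun _ hv => hf.sub_le_of_mem_chordValues hv
  rw [abs_le]
  constructor <;> linarith

theorem ConvexOn.deltaConvexOn_of_abs_sub_le {I : Set ℝ} {δ : ℝ} {f g : ℝ → ℝ}
    (hg : ConvexOn ℝ I g) (hfg : ∀ x ∈ I, |f x - g x| ≤ δ / 2) : DeltaConvexOn I δ f := by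
  intro x hx y hy t ht₀ ht₁
  have ht₁' : 0 ≤ 1 - t := by linarith
  have hgz := hg.2 hx hy ht₀ ht₁' (by ring)
  have hfz := (abs_le.mp (hfg _ (hg.1 hx hy ht₀ ht₁' (by ring)))).2
  simp only [smul_eq_mul] at hgz hfz
  have hfx := (abs_le.mp (hfg x hx)).1
  have hfy := (abs_le.mp (hfg y hy)).1
  calc f (t * x + (1 - t) * y) ≤ g (t * x + (1 - t) * y) + δ / 2 := by linarith
    _ ≤ t * g x + (1 - t) * g y + δ / 2 := by linarith
    _ ≤ t * (f x + δ / 2) + (1 - t) * (f y + δ / 2) + δ / 2 := by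
      gcongr <;> linarith
    _ = t * f x + (1 - t) * f y + δ := by ring

theorem hyers_ulam_delta_convex_general
    {I : Set ℝ} (hI : Convex ℝ I) {δ : ℝ} (f : ℝ → ℝ) :
    (∀ x ∈ I, ∀ y ∈ I, ∀ t : ℝ, 0 ≤ t → t ≤ 1 →
        f (t * x + (1 - t) * y) ≤ t * f x + (1 - t) * f y + δ) ↔
      (∃ g h : ℝ → ℝ, ConvexOn ℝ I g ∧ (∀ x ∈ I, |h x| ≤ δ / 2) ∧
        ∀ x ∈ I, f x = g x + h x) := by
  constructor
  · intro hf
    obtain ⟨g, hg, hfg⟩ := DeltaConvexOn.exists_convexOn_abs_sub_le hI hf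
    exact ⟨g, f - g, hg, hfg, fun x _ => by simp⟩
  · rintro ⟨g, h, hg, hh, hfgh⟩
    refine hg.deltaConvexOn_of_abs_sub_le fun x hx => ?_
    rw [hfgh x hx, add_sub_cancel_left]
    exact hh x hx

/-- **Hyers–Ulam theorem for approximately convex functions.** A function `f : I → ℝ` on an
interval `I` is `δ`-convex (`f(tx+(1-t)y) ≤ t f(x) + (1-t) f(y) + δ` for `x, y ∈ I`,
`t ∈ [0,1]`) if and only if `f = g + h` with `g` convex on `I` and `sup_{x ∈ I} |h x| ≤ δ/2`. -/
theorem hyers_ulam_delta_convex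
    {I : Set ℝ} (hI : Convex ℝ I) {δ : ℝ} (hδ : 0 ≤ δ) (f : ℝ → ℝ) :
    (∀ x ∈ I, ∀ y ∈ I, ∀ t : ℝ, 0 ≤ t → t ≤ 1 →
        f (t * x + (1 - t) * y) ≤ t * f x + (1 - t) * f y + δ) ↔
      (∃ g h : ℝ → ℝ, ConvexOn ℝ I g ∧ (∀ x ∈ I, |h x| ≤ δ / 2) ∧
        ∀ x ∈ I, f x = g x + h x) :=
  hyers_ulam_delta_convex_general hI f
end

section
/- Let f : I → ℝ be δ-convex on an interval I (δ ≥ 0) and let X be an I-valued integrable random variable with f(X) integrable. Then E(f(X)) ≥ f(E(X)) − δ. -/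
/-!
At any point `a` with points of `I` on both sides, `δ`-convexity forces every left chord slope of
`f` at `a`, corrected by `δ`, to lie below every corrected right chord slope. Any `c` in between is
the slope of an affine function `f a - δ + c (z - a)` lying below `f` on `I`; integrating it at
`a = E X` gives the claim. If `X` is not a.e. equal to `E X`, its values do lie on both sides.
-/

open MeasureTheory

def ApproxConvexOn (δ : ℝ) (I : Set ℝ) (f : ℝ → ℝ) : Prop :=
  ∀ x ∈ I, ∀ y ∈ I, ∀ t : ℝ, 0 ≤ t → t ≤ 1 →
    f (t * x + (1 - t) * y) ≤ t * f x + (1 - t) * f y + δ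

namespace ApproxConvexOn

variable {δ : ℝ} {I : Set ℝ} {f : ℝ → ℝ}

theorem slope_le (hf : ApproxConvexOn δ I f) {x y a : ℝ} (hx : x ∈ I) (hy : y ∈ I)
    (hxa : x < a) (hay : a < y) :
    (f a - f x - δ) / (a - x) ≤ (f y - f a + δ) / (y - a) := by
  have hyx : 0 < y - x := by linarith
  have hconv := hf x hx y hy ((y - a) / (y - x)) (by positivity)
    ((div_le_one hyx).2 (by linarith))
  have hcomb : (y - a) / (y - x) * x + (1 - (y - a) / (y - x)) * y = a := by
    field_simp; ring
  have hweights : 1 - (y - a) / (y - x) = (a - x) / (y - x) := by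
    field_simp; ring
  rw [hcomb, hweights] at hconv
  have hcleared : f a * (y - x) ≤ (y - a) * f x + (a - x) * f y + δ * (y - x) := by
    have := mul_le_mul_of_nonneg_right hconv hyx.le
    field_simp at this
    linarith
  rw [div_le_div_iff₀ (by linarith) (by linarith)]
  linear_combination hcleared

theorem exists_affine_le (hf : ApproxConvexOn δ I f) (hδ : 0 ≤ δ) {x y a : ℝ} (hx : x ∈ I)
    (hy : y ∈ I) (hxa : x < a) (hay : a < y) :
    ∃ c, ∀ z ∈ I, f a - δ + c * (z - a) ≤ f z := by
  set S := (fun z => (f a - f z - δ) / (a - z)) '' {z ∈ I | z < a}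
  have hS : BddAbove S := by
    refine ⟨(f y - f a + δ) / (y - a), ?_⟩
    rintro _ ⟨z, ⟨hz, hza⟩, rfl⟩
    exact hf.slope_le hz hy hza hay
  refine ⟨sSup S, fun z hz => ?_⟩
  rcases lt_trichotomy z a with hza | rfl | haz
  · have hle := le_csSup hS ⟨z, ⟨hz, hza⟩, rfl⟩
    rw [div_le_iff₀ (sub_pos.2 hza)] at hle
    linarith
  · simpa using hδ
  · have hle : sSup S ≤ (f z - f a + δ) / (z - a) := by
      refine csSup_le ⟨_, x, ⟨hx, hxa⟩, rfl⟩ ?_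
      rintro _ ⟨w, ⟨hw, hwa⟩, rfl⟩
      exact hf.slope_le hw hz hwa haz
    rw [le_div_iff₀ (sub_pos.2 haz)] at hle
    linarith

end ApproxConvexOn

section ValuesAroundMean

variable {Ω : Type*} {m0 : MeasurableSpace Ω} {μ : Measure Ω} [IsProbabilityMeasure μ]
  {I : Set ℝ} {X : Ω → ℝ}

theorem exists_mem_lt_integral (hXI : ∀ᵐ ω ∂μ, X ω ∈ I) (hX : Integrable X μ)
    (hne : ¬X =ᵐ[μ] fun _ => ∫ ω, X ω ∂μ) : ∃ x ∈ I, x < ∫ ω, X ω ∂μ := by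
  by_contra! h
  have hle : (fun _ => ∫ ω, X ω ∂μ) ≤ᵐ[μ] X := hXI.mono fun ω hω => h _ hω
  exact hne ((integral_eq_iff_of_ae_le (integrable_const _) hX hle).1 (by simp)).symm

theorem exists_mem_integral_lt (hXI : ∀ᵐ ω ∂μ, X ω ∈ I) (hX : Integrable X μ)
    (hne : ¬X =ᵐ[μ] fun _ => ∫ ω, X ω ∂μ) : ∃ y ∈ I, ∫ ω, X ω ∂μ < y := by
  by_contra! h
  have hle : X ≤ᵐ[μ] fun _ => ∫ ω, X ω ∂μ := hXI.mono fun ω hω => h _ hω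
  exact hne ((integral_eq_iff_of_ae_le hX (integrable_const _) hle).1 (by simp))

end ValuesAroundMean

theorem approximate_jensen_general
    {Ω : Type*} {m0 : MeasurableSpace Ω} {μ : Measure Ω} [IsProbabilityMeasure μ]
    {I : Set ℝ} {δ : ℝ} (hδ : 0 ≤ δ) {f : ℝ → ℝ}
    (hf : ∀ x ∈ I, ∀ y ∈ I, ∀ t : ℝ, 0 ≤ t → t ≤ 1 →
      f (t * x + (1 - t) * y) ≤ t * f x + (1 - t) * f y + δ)
    {X : Ω → ℝ} (hXI : ∀ᵐ ω ∂μ, X ω ∈ I)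
    (hXint : Integrable X μ) (hfXint : Integrable (fun ω => f (X ω)) μ) :
    f (∫ ω, X ω ∂μ) - δ ≤ ∫ ω, f (X ω) ∂μ := by
  set a := ∫ ω, X ω ∂μ
  by_cases hconst : X =ᵐ[μ] fun _ => a
  · rw [integral_congr_ae (hconst.mono fun _ hω => congrArg f hω)]
    simpa using hδ
  obtain ⟨x, hx, hxa⟩ := exists_mem_lt_integral hXI hXint hconst
  obtain ⟨y, hy, hay⟩ := exists_mem_integral_lt hXI hXint hconst
  obtain ⟨c, hc⟩ := ApproxConvexOn.exists_affine_le hf hδ hx hy hxa hay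
  have hdev : Integrable (fun ω => c * (X ω - a)) μ := (hXint.sub (integrable_const a)).const_mul c
  calc f a - δ = ∫ ω, (f a - δ + c * (X ω - a)) ∂μ := by
        rw [integral_add (integrable_const _) hdev, integral_const_mul,
          integral_sub hXint (integrable_const a)]
        simp [a]
    _ ≤ ∫ ω, f (X ω) ∂μ :=
        integral_mono_ae ((integrable_const _).add hdev) hfXint (hXI.mono fun ω hω => hc _ hω)

/-- **Approximate Jensen inequality.** If `f` is `δ`-convex on an interval `I` and `X` is an
`I`-valued integrable random variable with `f ∘ X` integrable (and `E X ∈ I`), then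
`E(f(X)) ≥ f(E(X)) - δ`. -/
theorem approximate_jensen
    {Ω : Type*} {m0 : MeasurableSpace Ω} {μ : Measure Ω} [IsProbabilityMeasure μ]
    {I : Set ℝ} (hI : Convex ℝ I) {δ : ℝ} (hδ : 0 ≤ δ) {f : ℝ → ℝ}
    (hf : ∀ x ∈ I, ∀ y ∈ I, ∀ t : ℝ, 0 ≤ t → t ≤ 1 →
      f (t * x + (1 - t) * y) ≤ t * f x + (1 - t) * f y + δ)
    {X : Ω → ℝ} (hXI : ∀ᵐ ω ∂μ, X ω ∈ I)
    (hXint : Integrable X μ) (hfXint : Integrable (fun ω => f (X ω)) μ)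
    (hEX : (∫ ω, X ω ∂μ) ∈ I) :
    f (∫ ω, X ω ∂μ) - δ ≤ ∫ ω, f (X ω) ∂μ :=
  approximate_jensen_general (m0 := m0) hδ hf hXI hXint hfXint
end
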